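/- Let K be a field, T = K[x_0,...,x_n], J a strongly stable ideal generated in degree m, F a J-marked set and I = (F). If F is a J-marked basis, then for all t ≥ m the set F^{(t)} is a K-basis of I_t. -/

import Mathlib

open MvPolynomial

noncomputable section

/-- The total degree of an exponent vector. -/
def degOf {N : ℕ} (α : Fin N →₀ ℕ) : ℕ := α.sum fun _ e => e

/-- The degree `t` homogeneous component of a homogeneous ideal, as a `K`-subspace. -/
def degPiece {K : Type*} [Field K] {N : ℕ} (I : Ideal (MvPolynomial (Fin N) K)) (t : ℕ) :
    Submodule K (MvPolynomial (Fin N) K) :=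
  (Submodule.restrictScalars K
      (I : Submodule (MvPolynomial (Fin N) K) (MvPolynomial (Fin N) K)))
    ⊓ homogeneousSubmodule (Fin N) K t

/-- The Hilbert function of the quotient by a homogeneous ideal:
`dim_K (P/I)_t = dim_K P_t - dim_K I_t`. -/
def hilbF {K : Type*} [Field K] {N : ℕ} (I : Ideal (MvPolynomial (Fin N) K)) (t : ℕ) : ℕ :=
  Module.finrank K (homogeneousSubmodule (Fin N) K t) - Module.finrank K (degPiece I t)

/-- The ideal generated by the monomials with exponents in `S`. -/
def monIdeal (K : Type*) [Field K] {N : ℕ} (S : Set (Fin N →₀ ℕ)) :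
    Ideal (MvPolynomial (Fin N) K) :=
  Ideal.span ((fun a => (monomial a (1 : K))) '' S)

/-- A monomial ideal `J` is strongly stable: it is generated by monomials and for every
term `x^α ∈ J`, every `x_i ∣ x^α` and every `j > i`, also `(x_j/x_i)·x^α ∈ J`. -/
def SStable {K : Type*} [Field K] {N : ℕ} (J : Ideal (MvPolynomial (Fin N) K)) : Prop :=
  (∃ S : Set (Fin N →₀ ℕ), J = monIdeal K S) ∧
  ∀ α : Fin N →₀ ℕ, (monomial α (1 : K)) ∈ J → ∀ i j : Fin N, i < j → α i ≠ 0 →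
    (monomial (α - Finsupp.single i 1 + Finsupp.single j 1) (1 : K)) ∈ J

/-- A `B`-marked set: for each exponent `α ∈ B` (the monomial basis of `J = (B)`), a
homogeneous polynomial `f α = x^α - Σ c_{αγ} x^γ` with head term `x^α` (coefficient `1`) and
all other terms `x^γ` monomials of the same degree not belonging to `J`. -/
def IsMarkedSet {K : Type*} [Field K] {N : ℕ} (B : Finset (Fin N →₀ ℕ))
    (f : (Fin N →₀ ℕ) → MvPolynomial (Fin N) K) : Prop :=
  ∀ α ∈ B, (f α).IsHomogeneous (degOf α) ∧ (f α).coeff α = 1 ∧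
    ∀ β, β ≠ α → (f α).coeff β ≠ 0 →
      (monomial β (1 : K)) ∉ monIdeal K (B : Set (Fin N →₀ ℕ))

/-- The `K`-span of the monomials lying outside the monomial ideal `J = (B)`. -/
def compSpan (K : Type*) [Field K] {N : ℕ} (B : Finset (Fin N →₀ ℕ)) :
    Submodule K (MvPolynomial (Fin N) K) :=
  Submodule.span K
    { p | ∃ β : Fin N →₀ ℕ, (monomial β (1 : K)) ∉ monIdeal K (B : Set (Fin N →₀ ℕ)) ∧
      p = monomial β (1 : K) }

/-- A marked set `f` is a `J`-marked basis if the monomials outside `J = (B)` freely generate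
the quotient `T/(F)`, i.e. `T` is the direct sum (as `K`-vector space) of the ideal generated
by the marked polynomials and the span of the monomials outside `J`. -/
def IsMarkedBasis {K : Type*} [Field K] {N : ℕ} (B : Finset (Fin N →₀ ℕ))
    (f : (Fin N →₀ ℕ) → MvPolynomial (Fin N) K) : Prop :=
  IsMarkedSet B f ∧
  (Submodule.restrictScalars K
      ((Ideal.span (f '' (B : Set (Fin N →₀ ℕ)))) :
        Submodule (MvPolynomial (Fin N) K) (MvPolynomial (Fin N) K)))
    ⊓ compSpan K B = ⊥ ∧
  (Submodule.restrictScalars K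
      ((Ideal.span (f '' (B : Set (Fin N →₀ ℕ)))) :
        Submodule (MvPolynomial (Fin N) K) (MvPolynomial (Fin N) K)))
    ⊔ compSpan K B = ⊤

/-!
Every monomial `x^δ ∈ J` factors uniquely as `x^η · x^α` with `x^α` a minimal generator of `J` and
`max(x^η) ≤ min(x^α)` (strong stability moves variables from `x^η` into `x^α`). Among all
`η ≤ δ` of that degree, this cofactor has the least index weight `∑ i·η_i`. In `x^η f_α` every
term other than `x^(η+α)` is either outside `J` or has a cofactor of smaller weight, because the
tail of `f_α` lies outside `J`. Hence `F^(t)` is triangular with respect to the weight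
(linear independence), and induction on the weight gives `T_t ⊆ ⟨F^(t)⟩ + ⟨N(J)⟩`; intersecting
with `(F)`, which meets `⟨N(J)⟩` trivially, gives `I_t = ⟨F^(t)⟩`.
-/

theorem Fin.sum_val_mul_pos {N : ℕ} {D : Fin N → ℤ} (r : Fin N)
    (hlow : ∀ i < r, D i ≤ 0) (hhigh : ∀ i, r < i → 0 ≤ D i)
    (hsum : ∑ i, D i = 0) (hD : D ≠ 0) : 0 < ∑ i : Fin N, ((i : ℕ) : ℤ) * D i := by
  have hterm : ∀ i : Fin N, 0 ≤ (((i : ℕ) : ℤ) - r) * D i := by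
    intro i
    rcases lt_trichotomy i r with h | rfl | h
    · exact mul_nonneg_of_nonpos_of_nonpos (sub_nonpos.2 (by exact_mod_cast h.le)) (hlow i h)
    · simp
    · exact mul_nonneg (sub_nonneg.2 (by exact_mod_cast h.le)) (hhigh i h)
  obtain ⟨i, hir, hi⟩ : ∃ i ≠ r, D i ≠ 0 := by
    by_contra! h
    have hr : D r = 0 := by
      rwa [Finset.sum_eq_single r (fun i _ hi => h i hi) (by simp)] at hsum
    exact hD (funext fun i => if hi : i = r then hi ▸ hr else h i hi)
  have hir' : ((i : ℕ) : ℤ) - r ≠ 0 := sub_ne_zero.2 (by exact_mod_cast Fin.val_ne_of_ne hir)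
  calc 0 < ∑ i : Fin N, (((i : ℕ) : ℤ) - r) * D i :=
        Finset.sum_pos' (fun i _ => hterm i)
          ⟨i, Finset.mem_univ i, (hterm i).lt_of_ne (mul_ne_zero hir' hi).symm⟩
    _ = ∑ i : Fin N, ((i : ℕ) : ℤ) * D i := by
        simp [sub_mul, Finset.sum_sub_distrib, ← Finset.mul_sum, hsum]

theorem linearIndependent_of_triangular {ι κ R M : Type*} [LinearOrder κ] [Ring R]
    [NoZeroDivisors R] [AddCommGroup M] [Module R M] {v : ι → M} (c : ι → M →ₗ[R] R)
    (o : ι → κ) (hdiag : ∀ i, c i (v i) ≠ 0)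
    (hoff : ∀ i j, i ≠ j → c j (v i) ≠ 0 → o j < o i) : LinearIndependent R v := by
  rw [linearIndependent_iff]
  intro l hl
  by_contra hne
  obtain ⟨i, hi, hmax⟩ := l.support.exists_max_image o (Finsupp.support_nonempty_iff.2 hne)
  have hci := congrArg (c i) hl
  rw [Finsupp.linearCombination_apply, map_finsuppSum, Finsupp.sum,
    Finset.sum_eq_single_of_mem i hi, map_smul, map_zero, smul_eq_mul] at hci
  · exact (mul_ne_zero (Finsupp.mem_support_iff.1 hi) (hdiag i)) hci
  · intro j hj hji
    rw [map_smul, smul_eq_mul]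
    by_contra h
    exact (hmax j hj).not_gt (hoff j i hji (right_ne_zero_of_mul h))

theorem MvPolynomial.mem_of_forall_monomial_mem {σ R : Type*} [CommSemiring R]
    {V : Submodule R (MvPolynomial σ R)} {p : MvPolynomial σ R}
    (h : ∀ δ ∈ p.support, monomial δ 1 ∈ V) : p ∈ V := by
  rw [p.as_sum]
  refine Submodule.sum_mem _ fun δ hδ => ?_
  simpa [smul_monomial] using V.smul_mem (coeff δ p) (h δ hδ)

section MarkedBasis

variable {K : Type*} [Field K] {N m : ℕ}

def IsSeparated (η α : Fin N →₀ ℕ) : Prop := ∀ i j, η i ≠ 0 → α j ≠ 0 → i ≤ j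

abbrev indexWeight : (Fin N →₀ ℕ) →+ ℕ := Finsupp.weight fun i : Fin N => (i : ℕ)

/-- `η'` takes all of `η' + α'` below `max η'`, so any other `η ≤ η' + α'` of the same degree
trades some of that for variables of higher index. -/
theorem indexWeight_lt_of_isSeparated {η η' α' : Fin N →₀ ℕ} (hsep : IsSeparated η' α')
    (hle : η ≤ η' + α') (hdeg : η.degree = η'.degree) (hne : η ≠ η') :
    indexWeight η' < indexWeight η := by
  have hη' : η' ≠ 0 := by
    rintro rfl
    exact hne ((Finsupp.degree_eq_zero_iff η).1 (by simpa using hdeg))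
  set r := η'.support.max' (Finsupp.support_nonempty_iff.2 hη')
  have hr : η' r ≠ 0 := Finsupp.mem_support_iff.1 (Finset.max'_mem _ _)
  have hpos := Fin.sum_val_mul_pos (D := fun i => (η i : ℤ) - η' i) r
    (fun i hi => by
      have hα' : α' i = 0 := by
        by_contra h
        exact (hsep r i hr h).not_gt hi
      have := hle i
      simp only [Finsupp.add_apply, hα', add_zero] at this
      simpa using this)
    (fun i hi => by
      have hη'i : η' i = 0 := by
        by_contra h
        exact (Finset.le_max' _ i (Finsupp.mem_support_iff.2 h)).not_gt hi
      simp [hη'i])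
    (by
      rw [Finset.sum_sub_distrib, ← Nat.cast_sum, ← Nat.cast_sum, ← Finsupp.degree_eq_sum,
        ← Finsupp.degree_eq_sum, hdeg, sub_self])
    (fun h => hne (Finsupp.ext fun i => by simpa [sub_eq_zero] using congrFun h i))
  have hw : ∀ ξ : Fin N →₀ ℕ, (indexWeight ξ : ℤ) = ∑ i : Fin N, ((i : ℕ) : ℤ) * ξ i := by
    intro ξ
    simp [Finsupp.weight_eq_sum, mul_comm]
  have := hw η
  have := hw η'
  simp only [mul_sub, Finset.sum_sub_distrib] at hpos
  omega

theorem monomial_mem_monIdeal_iff {S : Set (Fin N →₀ ℕ)} {β : Fin N →₀ ℕ} :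
    monomial β (1 : K) ∈ monIdeal K S ↔ ∃ s ∈ S, s ≤ β := by
  rw [monIdeal, mem_ideal_span_monomial_image]
  simp

theorem monomial_mem_monIdeal {S : Set (Fin N →₀ ℕ)} {α : Fin N →₀ ℕ} (hα : α ∈ S) :
    monomial α (1 : K) ∈ monIdeal K S :=
  Ideal.subset_span ⟨α, hα, rfl⟩

variable {B : Finset (Fin N →₀ ℕ)}

theorem mem_of_monomial_mem_monIdeal (hdeg : ∀ α ∈ B, α.degree = m) {β : Fin N →₀ ℕ}
    (hβ : monomial β (1 : K) ∈ monIdeal K (B : Set (Fin N →₀ ℕ))) (hβm : β.degree = m) :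
    β ∈ B := by
  obtain ⟨s, hs, hsβ⟩ := monomial_mem_monIdeal_iff.1 hβ
  obtain ⟨u, rfl⟩ := exists_add_of_le hsβ
  have hu : u.degree = 0 := by
    have := hdeg s hs
    simp only [map_add] at hβm
    omega
  rwa [(Finsupp.degree_eq_zero_iff u).1 hu, add_zero]

theorem add_single_mem_of_strongly_stable (hss : SStable (monIdeal K (B : Set (Fin N →₀ ℕ))))
    (hdeg : ∀ α ∈ B, α.degree = m) {b : Fin N →₀ ℕ} {i j : Fin N}
    (hb : b + Finsupp.single i 1 ∈ B) (hij : i < j) : b + Finsupp.single j 1 ∈ B := by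
  have hmem := hss.2 _ (monomial_mem_monIdeal (K := K) hb) i j hij (by simp)
  rw [add_tsub_cancel_right] at hmem
  refine mem_of_monomial_mem_monIdeal hdeg hmem ?_
  simpa using hdeg _ hb

/-- Exchanging `x_i ∣ x^η` and `x_j ∣ x^α` with `j < i` keeps `α` in `B` by strong stability and
lowers the index weight of `η`. -/
theorem exists_isSeparated_add_eq (hss : SStable (monIdeal K (B : Set (Fin N →₀ ℕ))))
    (hdeg : ∀ α ∈ B, α.degree = m) (η : Fin N →₀ ℕ) {α : Fin N →₀ ℕ} (hα : α ∈ B) :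
    ∃ η' α', α' ∈ B ∧ IsSeparated η' α' ∧ η' + α' = η + α := by
  induction hW : indexWeight η using Nat.strong_induction_on generalizing η α with
  | _ W IH =>
  by_cases hsep : IsSeparated η α
  · exact ⟨η, α, hα, hsep, rfl⟩
  obtain ⟨i, j, hi, hj, hji⟩ : ∃ i j, η i ≠ 0 ∧ α j ≠ 0 ∧ j < i := by
    simpa [IsSeparated] using hsep
  obtain ⟨a, rfl⟩ : ∃ a, η = a + Finsupp.single i 1 :=
    ⟨η - Finsupp.single i 1, (tsub_add_cancel_of_le (Finsupp.single_le_iff.2 (by omega))).symm⟩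
  obtain ⟨b, rfl⟩ : ∃ b, α = b + Finsupp.single j 1 :=
    ⟨α - Finsupp.single j 1, (tsub_add_cancel_of_le (Finsupp.single_le_iff.2 (by omega))).symm⟩
  have hlt : indexWeight (a + Finsupp.single j 1) < W := by
    subst hW
    simpa [Finsupp.weight_single] using hji
  obtain ⟨η', α', hα', hsep', heq⟩ :=
    IH _ hlt (a + Finsupp.single j 1) (add_single_mem_of_strongly_stable hss hdeg hα hji) rfl
  exact ⟨η', α', hα', hsep', heq.trans (by abel)⟩

theorem exists_isSeparated_of_monomial_mem (hss : SStable (monIdeal K (B : Set (Fin N →₀ ℕ))))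
    (hdeg : ∀ α ∈ B, α.degree = m) {δ : Fin N →₀ ℕ}
    (hδ : monomial δ (1 : K) ∈ monIdeal K (B : Set (Fin N →₀ ℕ))) :
    ∃ η α, α ∈ B ∧ IsSeparated η α ∧ η + α = δ := by
  obtain ⟨s, hs, hsδ⟩ := monomial_mem_monIdeal_iff.1 hδ
  obtain ⟨u, rfl⟩ := exists_add_of_le hsδ
  obtain ⟨η, α, hα, hsep, heq⟩ := exists_isSeparated_add_eq hss hdeg u hs
  exact ⟨η, α, hα, hsep, heq.trans (add_comm u s)⟩

/-- The set `F^(t)`. -/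
def markedMultiples (B : Finset (Fin N →₀ ℕ)) (f : (Fin N →₀ ℕ) → MvPolynomial (Fin N) K)
    (t : ℕ) : Set (MvPolynomial (Fin N) K) :=
  { p | ∃ η α, α ∈ B ∧ degOf η + degOf α = t ∧ IsSeparated η α ∧ p = monomial η 1 * f α }

variable {f : (Fin N →₀ ℕ) → MvPolynomial (Fin N) K}

theorem coeff_add_monomial_mul_eq_one (hms : IsMarkedSet B f) {α : Fin N →₀ ℕ} (hα : α ∈ B)
    (η : Fin N →₀ ℕ) : coeff (η + α) (monomial η 1 * f α) = 1 := by
  rw [coeff_monomial_mul, one_mul, (hms α hα).2.1]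

theorem degree_eq_of_coeff_monomial_mul_ne_zero (hms : IsMarkedSet B f) {η α δ : Fin N →₀ ℕ}
    (hα : α ∈ B) (hδ : coeff δ (monomial η 1 * f α) ≠ 0) : δ.degree = η.degree + α.degree := by
  by_contra h
  exact hδ (((isHomogeneous_monomial 1 rfl).mul (hms α hα).1).coeff_eq_zero h)

/-- For `η = η'` the term would come from a term `x^α'` of `f_α` with `α' ≠ α`, but these lie
outside `J`. -/
theorem indexWeight_lt_of_coeff_ne_zero (hms : IsMarkedSet B f) (hdeg : ∀ α ∈ B, α.degree = m)
    {η α η' α' : Fin N →₀ ℕ} (hα : α ∈ B) (hα' : α' ∈ B) (hsep : IsSeparated η' α')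
    (hc : coeff (η' + α') (monomial η 1 * f α) ≠ 0) (hne : (η, α) ≠ (η', α')) :
    indexWeight η' < indexWeight η := by
  have hdegη : η.degree = η'.degree := by
    have := degree_eq_of_coeff_monomial_mul_ne_zero hms hα hc
    rw [map_add, hdeg α hα, hdeg α' hα'] at this
    omega
  rw [coeff_monomial_mul'] at hc
  split_ifs at hc with hle
  · refine indexWeight_lt_of_isSeparated hsep hle hdegη ?_
    rintro rfl
    rw [one_mul, add_tsub_cancel_left] at hc
    exact (hms α hα).2.2 α' (fun h => hne (h ▸ rfl)) hc (monomial_mem_monIdeal hα')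
  · exact absurd rfl hc

/-- Writing `x^(η + α) = x^η f_α + x^η (x^α - f_α)`, the second summand only involves monomials
outside `J` and monomials whose separated cofactor has smaller index weight. -/
theorem monomial_add_mem_span_sup_compSpan (hss : SStable (monIdeal K (B : Set (Fin N →₀ ℕ))))
    (hdeg : ∀ α ∈ B, α.degree = m) (hms : IsMarkedSet B f) {t : ℕ} {η α : Fin N →₀ ℕ}
    (hα : α ∈ B) (hsep : IsSeparated η α) (ht : η.degree + α.degree = t) :
    monomial (η + α) (1 : K) ∈ Submodule.span K (markedMultiples B f t) ⊔ compSpan K B := by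
  induction hW : indexWeight η using Nat.strong_induction_on generalizing η α with
  | _ W IH =>
  rw [← add_sub_cancel (monomial η 1 * f α) (monomial (η + α) 1)]
  refine add_mem (Submodule.mem_sup_left (Submodule.subset_span ⟨η, α, hα, ht, hsep, rfl⟩))
    (mem_of_forall_monomial_mem fun δ hδ => ?_)
  have hδ' : δ ≠ η + α ∧ coeff δ (monomial η 1 * f α) ≠ 0 := by
    rw [mem_support_iff, coeff_sub, coeff_monomial] at hδ
    split_ifs at hδ with h
    · subst h
      rw [coeff_add_monomial_mul_eq_one hms hα, sub_self] at hδ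
      exact absurd rfl hδ
    · exact ⟨Ne.symm h, by simpa using hδ⟩
  by_cases hJ : monomial δ (1 : K) ∈ monIdeal K (B : Set (Fin N →₀ ℕ))
  · obtain ⟨η', α', hα', hsep', rfl⟩ := exists_isSeparated_of_monomial_mem hss hdeg hJ
    refine IH _ ?_ hα' hsep' ?_ rfl
    · exact hW ▸ indexWeight_lt_of_coeff_ne_zero hms hdeg hα hα' hsep' hδ'.2
        fun h => hδ'.1 (by obtain ⟨rfl, rfl⟩ := Prod.mk.inj h; rfl)
    · rw [← ht, ← map_add, degree_eq_of_coeff_monomial_mul_ne_zero hms hα hδ'.2]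
  · exact Submodule.mem_sup_right (Submodule.subset_span ⟨δ, hJ, rfl⟩)

theorem homogeneousSubmodule_le_span_sup_compSpan
    (hss : SStable (monIdeal K (B : Set (Fin N →₀ ℕ)))) (hdeg : ∀ α ∈ B, α.degree = m)
    (hms : IsMarkedSet B f) (t : ℕ) :
    homogeneousSubmodule (Fin N) K t ≤
      Submodule.span K (markedMultiples B f t) ⊔ compSpan K B := by
  intro g hg
  refine mem_of_forall_monomial_mem fun δ hδ => ?_
  by_cases hJ : monomial δ (1 : K) ∈ monIdeal K (B : Set (Fin N →₀ ℕ))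
  · obtain ⟨η, α, hα, hsep, rfl⟩ := exists_isSeparated_of_monomial_mem hss hdeg hJ
    refine monomial_add_mem_span_sup_compSpan hss hdeg hms hα hsep ?_
    by_contra h
    rw [← map_add] at h
    exact mem_support_iff.1 hδ (((mem_homogeneousSubmodule _ _).1 hg).coeff_eq_zero h)
  · exact Submodule.mem_sup_right (Submodule.subset_span ⟨δ, hJ, rfl⟩)

theorem span_markedMultiples_le_degPiece (hms : IsMarkedSet B f) (t : ℕ) :
    Submodule.span K (markedMultiples B f t) ≤
      degPiece (Ideal.span (f '' (B : Set (Fin N →₀ ℕ)))) t := by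
  rw [Submodule.span_le]
  rintro _ ⟨η, α, hα, ht, -, rfl⟩
  exact ⟨Ideal.mul_mem_left _ _ (Ideal.subset_span ⟨α, hα, rfl⟩),
    ht ▸ (isHomogeneous_monomial 1 rfl).mul (hms α hα).1⟩

/-- Spanning follows from `T_t ⊆ ⟨F^(t)⟩ + ⟨N(J)⟩` and `(F) ∩ ⟨N(J)⟩ = 0`, by the modular law. -/
theorem span_markedMultiples_eq_degPiece (hss : SStable (monIdeal K (B : Set (Fin N →₀ ℕ))))
    (hdeg : ∀ α ∈ B, α.degree = m) (hf : IsMarkedBasis B f) (t : ℕ) :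
    Submodule.span K (markedMultiples B f t) =
      degPiece (Ideal.span (f '' (B : Set (Fin N →₀ ℕ)))) t := by
  set I := Submodule.restrictScalars K
    ((Ideal.span (f '' (B : Set (Fin N →₀ ℕ)))) :
      Submodule (MvPolynomial (Fin N) K) (MvPolynomial (Fin N) K))
  set U := Submodule.span K (markedMultiples B f t)
  have hUI : U ≤ I := (span_markedMultiples_le_degPiece hf.1 t).trans inf_le_left
  refine le_antisymm (span_markedMultiples_le_degPiece hf.1 t) ?_
  calc degPiece (Ideal.span (f '' (B : Set (Fin N →₀ ℕ)))) t
      ≤ I ⊓ (U ⊔ compSpan K B) :=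
        inf_le_inf_left I (homogeneousSubmodule_le_span_sup_compSpan hss hdeg hf.1 t)
    _ = U := by rw [inf_comm, sup_inf_assoc_of_le _ hUI, inf_comm, hf.2.1, sup_bot_eq]

theorem linearIndependent_markedMultiples (hdeg : ∀ α ∈ B, α.degree = m) (hms : IsMarkedSet B f)
    (t : ℕ) :
    LinearIndependent K (fun p : markedMultiples B f t => (p : MvPolynomial (Fin N) K)) := by
  have himage : markedMultiples B f t =
      (fun p : (Fin N →₀ ℕ) × (Fin N →₀ ℕ) => monomial p.1 (1 : K) * f p.2) ''
        { p | p.2 ∈ B ∧ degOf p.1 + degOf p.2 = t ∧ IsSeparated p.1 p.2 } := by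
    ext
    simp [markedMultiples, and_assoc, eq_comm]
  change LinearIndepOn K id _
  rw [himage]
  refine LinearIndepOn.id_image (linearIndependent_of_triangular
    (fun p => lcoeff K (p.1.1 + p.1.2)) (fun p => indexWeight p.1.1) (fun p => ?_)
    fun p q hpq hc => ?_)
  · simp [coeff_add_monomial_mul_eq_one hms p.2.1]
  · exact indexWeight_lt_of_coeff_ne_zero hms hdeg p.2.1 q.2.1 q.2.2.2 hc
      fun h => hpq (Subtype.ext h)

end MarkedBasis

/-- If `F` is a `J`-marked basis for a strongly stable ideal `J` generated in degree `m` with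
monomial basis `B`, then for all `t ≥ m` the set
`F^(t) = { x^η · f_α : f_α ∈ F, deg(x^η f_α) = t, max(x^η) ≤ min(x^α) }`
is a `K`-basis of `I_t`, where `I = (F)`: it is linearly independent and spans `I_t`. -/
theorem Fts_basis {K : Type*} [Field K] {n m : ℕ}
    (B : Finset (Fin (n + 1) →₀ ℕ)) (hdeg : ∀ α ∈ B, degOf α = m)
    (hss : SStable (monIdeal K (B : Set (Fin (n + 1) →₀ ℕ))))
    (f : (Fin (n + 1) →₀ ℕ) → MvPolynomial (Fin (n + 1)) K) (hf : IsMarkedBasis B f) :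
    ∀ t ≥ m,
      (Submodule.span K { p : MvPolynomial (Fin (n + 1)) K |
          ∃ η α : Fin (n + 1) →₀ ℕ, α ∈ B ∧ degOf η + degOf α = t ∧
            (∀ i j : Fin (n + 1), η i ≠ 0 → α j ≠ 0 → i ≤ j) ∧
            p = monomial η (1 : K) * f α } =
        degPiece (Ideal.span (f '' (B : Set (Fin (n + 1) →₀ ℕ)))) t) ∧
      LinearIndependent K
        (fun p : { p : MvPolynomial (Fin (n + 1)) K |
          ∃ η α : Fin (n + 1) →₀ ℕ, α ∈ B ∧ degOf η + degOf α = t ∧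
            (∀ i j : Fin (n + 1), η i ≠ 0 → α j ≠ 0 → i ≤ j) ∧
            p = monomial η (1 : K) * f α } => (p : MvPolynomial (Fin (n + 1)) K)) :=
  fun t _ => ⟨span_markedMultiples_eq_degPiece hss hdeg hf t,
    linearIndependent_markedMultiples hdeg hf.1 t⟩

end
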